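/- Let τ_a < τ_b < τ_c be integers, let x : ℤ → ℝ^M be a flow, and let μ_1, μ_2 ∈ ℝ^M. Suppose (τ_b, μ_1, μ_2) is optimal for the two-period segmentation problem, i.e., for every integer τ̃_b with τ_a ≤ τ̃_b ≤ τ_c and all μ̃_1, μ̃_2 ∈ ℝ^M, F(τ_a+1, τ_b, x, μ_1) + F(τ_b+1, τ_c, x, μ_2) ≤ F(τ_a+1, τ̃_b, x, μ̃_1) + F(τ̃_b+1, τ_c, x, μ̃_2). Then for every integer t with τ_a ≤ t ≤ τ_b, the pair (τ_b, μ_2) remains optimal when the first-period parameter is frozen at μ_1 and the data before time t+1 is discarded: for every integer τ̃_b with t ≤ τ̃_b ≤ τ_c and every μ̃_2 ∈ ℝ^M, F(t+1, τ_b, x, μ_1) + F(τ_b+1, τ_c, x, μ_2) ≤ F(t+1, τ̃_b, x, μ_1) + F(τ̃_b+1, τ_c, x, μ̃_2). -/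
import Mathlib


/-- The asymmetric quadratic penalty: `φ(a,b) = C(a−b)² if a > b, else (a−b)²`. -/
noncomputable def phi (C a b : ℝ) : ℝ := if a > b then C * (a - b) ^ 2 else (a - b) ^ 2

/-- `Φ(v,μ) = Σ_{m} φ(v_m, μ_m)`. -/
noncomputable def Phi (M : ℕ) (C : ℝ) (v μ : Fin M → ℝ) : ℝ :=
  ∑ m : Fin M, phi C (v m) (μ m)

/-- The fit `F(t_a, t_b, x, μ) = Σ_{t=t_a}^{t_b} Φ(x(t), μ)`, equal to `0` when `t_b < t_a`. -/
noncomputable def fit (M : ℕ) (C : ℝ) (ta tb : ℤ) (x : ℤ → Fin M → ℝ) (μ : Fin M → ℝ) : ℝ :=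
  ∑ t ∈ Finset.Icc ta tb, Phi M C (x t) μ


lemma fit_split (M : ℕ) (C : ℝ) (a m b : ℤ) (ham : a ≤ m) (hmb : m ≤ b)
    (x : ℤ → Fin M → ℝ) (μ : Fin M → ℝ) :
    fit M C (a + 1) b x μ = fit M C (a + 1) m x μ + fit M C (m + 1) b x μ := by
  unfold fit
  have h1 : ∀ c d : ℤ, Finset.Icc (c + 1) d = Finset.Ioc c d := by
    intro c d; ext y; simp [Int.add_one_le_iff]
  rw [h1, h1, h1, ← Finset.Ioc_union_Ioc_eq_Ioc ham hmb, Finset.sum_union]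
  apply Finset.disjoint_left.2
  intro y hy h'y
  exact lt_irrefl _ ((Finset.mem_Ioc.1 h'y).1.trans_le (Finset.mem_Ioc.1 hy).2)

theorem stmt_0 (M : ℕ) (hM : 1 ≤ M) (C : ℝ) (hC : 1 ≤ C)
    (τa τb τc : ℤ) (hab : τa < τb) (hbc : τb < τc)
    (x : ℤ → Fin M → ℝ) (μ1 μ2 : Fin M → ℝ)
    (hopt : ∀ τb' : ℤ, τa ≤ τb' → τb' ≤ τc → ∀ μ1' μ2' : Fin M → ℝ,
      fit M C (τa + 1) τb x μ1 + fit M C (τb + 1) τc x μ2 ≤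
        fit M C (τa + 1) τb' x μ1' + fit M C (τb' + 1) τc x μ2') :
    ∀ t : ℤ, τa ≤ t → t ≤ τb →
      ∀ τb' : ℤ, t ≤ τb' → τb' ≤ τc → ∀ μ2' : Fin M → ℝ,
        fit M C (t + 1) τb x μ1 + fit M C (τb + 1) τc x μ2 ≤
          fit M C (t + 1) τb' x μ1 + fit M C (τb' + 1) τc x μ2' := by
  intro t hat htb τb' htb' hbc' μ2'
  have h := hopt τb' (hat.trans htb') hbc' μ1 μ2'
  rw [fit_split M C τa t τb hat htb x μ1,
      fit_split M C τa t τb' hat htb' x μ1] at h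
  linarith
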